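/- (Thermal area law, finite-dimensional form.) On ℂ^m ⊗ ℂ^n, let H_AB = H_A ⊗ 1 + H_∂ + 1 ⊗ H_B with H_A, H_B, H_∂ Hermitian, let β > 0, and let ρ = e^{−βH_AB}/Tr(e^{−βH_AB}) be the Gibbs state with reduced density matrices ρ_A and ρ_B. Then I_ρ(A:B) ≤ β · Tr(H_∂ (ρ_A ⊗ ρ_B − ρ)) ≤ 2β‖H_∂‖, where ‖·‖ is the operator norm. -/

import Mathlib

open scoped Kronecker ComplexOrder
open Matrix

noncomputable section

namespace TAL

/-- A density matrix: positive semidefinite with trace `1`. -/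
def IsDensityMatrix {k : Type*} [Fintype k] [DecidableEq k] (D : Matrix k k ℂ) : Prop :=
  D.PosSemidef ∧ D.trace = 1

/-- Functional calculus for Hermitian matrices via the spectral decomposition
(junk value `0` on non-Hermitian matrices). -/
def hermCalc {k : Type*} [Fintype k] [DecidableEq k] (f : ℝ → ℝ) (A : Matrix k k ℂ) :
    Matrix k k ℂ :=
  if hA : A.IsHermitian then
    (hA.eigenvectorUnitary : Matrix k k ℂ) *
      Matrix.diagonal (fun i => (f (hA.eigenvalues i) : ℂ)) *
        star (hA.eigenvectorUnitary : Matrix k k ℂ)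
  else 0

/-- Matrix logarithm via the spectral decomposition. -/
def matLog {k : Type*} [Fintype k] [DecidableEq k] (A : Matrix k k ℂ) : Matrix k k ℂ :=
  hermCalc Real.log A

/-- The von Neumann entropy `S(D) = -Tr (D log D)`, computed through the eigenvalues,
with the convention `0 * log 0 = 0` (junk value `0` on non-Hermitian matrices). -/
def vnEntropy {k : Type*} [Fintype k] [DecidableEq k] (A : Matrix k k ℂ) : ℝ :=
  if hA : A.IsHermitian then ∑ i, Real.negMulLog (hA.eigenvalues i) else 0

/-- The Umegaki relative entropy `S(D | E) = Tr (D (log D - log E))`. -/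
def relEntropy {k : Type*} [Fintype k] [DecidableEq k] (D E : Matrix k k ℂ) : ℝ :=
  ((D * (matLog D - matLog E)).trace).re

/-- Partial trace over the second (right) tensor factor. -/
def ptraceR {k₁ k₂ : Type*} [Fintype k₂] (D : Matrix (k₁ × k₂) (k₁ × k₂) ℂ) :
    Matrix k₁ k₁ ℂ :=
  Matrix.of fun i j => ∑ s : k₂, D (i, s) (j, s)

/-- Partial trace over the first (left) tensor factor. -/
def ptraceL {k₁ k₂ : Type*} [Fintype k₁] (D : Matrix (k₁ × k₂) (k₁ × k₂) ℂ) :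
    Matrix k₂ k₂ ℂ :=
  Matrix.of fun i j => ∑ s : k₁, D (s, i) (s, j)

/-- The mutual entropy `I_D(A:B) = S(D_A) + S(D_B) - S(D)`. -/
def mutualEntropy {k₁ k₂ : Type*} [Fintype k₁] [Fintype k₂] [DecidableEq k₁] [DecidableEq k₂]
    (D : Matrix (k₁ × k₂) (k₁ × k₂) ℂ) : ℝ :=
  vnEntropy (ptraceR D) + vnEntropy (ptraceL D) - vnEntropy D

/-- The Gibbs density matrix `e^{-β H} / Tr(e^{-β H})`. -/
def gibbs {k : Type*} [Fintype k] [DecidableEq k] (β : ℝ) (H : Matrix k k ℂ) :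
    Matrix k k ℂ :=
  (NormedSpace.exp ((-(β : ℂ)) • H)).trace⁻¹ • NormedSpace.exp ((-(β : ℂ)) • H)

/-- The free energy functional `F(D) = Tr(H D) - β⁻¹ S(D)` (real part of the trace). -/
def freeEnergy {k : Type*} [Fintype k] [DecidableEq k] (β : ℝ) (H D : Matrix k k ℂ) : ℝ :=
  ((H * D).trace).re - β⁻¹ * vnEntropy D

/-- The ℓ²-operator norm of a matrix. -/
def opNorm {k : Type*} [Fintype k] [DecidableEq k] (A : Matrix k k ℂ) : ℝ :=
  ‖(Matrix.toEuclideanCLM (𝕜 := ℂ) A : EuclideanSpace ℂ k →L[ℂ] EuclideanSpace ℂ k)‖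

/-- The trace norm `‖X‖₁ = Tr ((X* X)^{1/2})`. -/
def traceNorm {k : Type*} [Fintype k] [DecidableEq k] (X : Matrix k k ℂ) : ℝ :=
  (((Matrix.isHermitian_conjTranspose_mul_self X).eigenvectorUnitary : Matrix k k ℂ) *
      Matrix.diagonal (fun i =>
        ((Real.sqrt ((Matrix.isHermitian_conjTranspose_mul_self X).eigenvalues i) : ℝ) : ℂ)) *
      star ((Matrix.isHermitian_conjTranspose_mul_self X).eigenvectorUnitary : Matrix k k ℂ)).trace.re


/-- The perturbed density matrix `D^h = e^{log D + h} / Tr(e^{log D + h})`. -/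
def pert {k : Type*} [Fintype k] [DecidableEq k] (D h : Matrix k k ℂ) : Matrix k k ℂ :=
  (NormedSpace.exp (matLog D + h)).trace⁻¹ • NormedSpace.exp (matLog D + h)


/-!
Since `log ρ = -β H - log Z`, the relative entropy of any state `σ` with respect to the Gibbs
state is `S(σ ‖ ρ) = -S(σ) + β Tr(H σ) + log Z`, while `S(ρ) = β Tr(H ρ) + log Z`. For the product
of the marginals `σ = ρ_A ⊗ ρ_B` the entropy is additive, `S(σ) = S(ρ_A) + S(ρ_B)`, so Klein's
inequality `S(σ ‖ ρ) ≥ 0` becomes `I_ρ(A:B) ≤ β Tr(H (σ - ρ))`. As `σ` and `ρ` have the same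
marginals, the local terms `H_A ⊗ 1` and `1 ⊗ H_B` drop out and only the boundary term is left;
it is at most `2 ‖H_∂‖` because `|Tr(H_∂ D)| ≤ ‖H_∂‖` for every density matrix `D`.

Klein's inequality is the scalar inequality `p - q ≤ p log p - p log q`, averaged against the
doubly stochastic matrix `|⟨u_i, v_j⟩|²` of overlaps between the eigenbases of the two states.
-/

open Unitary

section Spectral

variable {k : Type*} [Fintype k] [DecidableEq k]

theorem _root_.Matrix.IsHermitian.eq_conj_diagonal_eigenvalues {A : Matrix k k ℂ}
    (hA : A.IsHermitian) :
    A = conjStarAlgAut ℂ _ hA.eigenvectorUnitary (diagonal fun i => (hA.eigenvalues i : ℂ)) := by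
  conv_lhs => rw [hA.spectral_theorem]
  rfl

theorem _root_.Matrix.PosSemidef.exists_eq_conj_diagonal {D : Matrix k k ℂ} (hD : D.PosSemidef) :
    ∃ (U : unitary (Matrix k k ℂ)) (p : k → ℝ), (∀ i, 0 ≤ p i) ∧
      D = conjStarAlgAut ℂ _ U (diagonal fun i => (p i : ℂ)) :=
  ⟨_, _, hD.eigenvalues_nonneg, hD.isHermitian.eq_conj_diagonal_eigenvalues⟩

theorem sum_eigenvalues_eq_one {A : Matrix k k ℂ} (hA : A.IsHermitian) (h : A.trace = 1) :
    ∑ i, hA.eigenvalues i = 1 := by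
  rw [← RCLike.ofReal_inj (K := ℂ), RCLike.ofReal_sum, ← hA.trace_eq_sum_eigenvalues, h,
    RCLike.ofReal_one]

theorem trace_conjStarAlgAut (U : unitary (Matrix k k ℂ)) (M : Matrix k k ℂ) :
    (conjStarAlgAut ℂ _ U M).trace = M.trace := by
  rw [conjStarAlgAut_apply, trace_mul_cycle, coe_star_mul_self, one_mul]

theorem isHermitian_conj_diagonal (U : unitary (Matrix k k ℂ)) (c : k → ℝ) :
    (conjStarAlgAut ℂ _ U (diagonal fun i => (c i : ℂ))).IsHermitian := by
  have hc : (diagonal fun i => (c i : ℂ)).IsHermitian :=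
    isHermitian_diagonal_of_self_adjoint _ (by ext i; simp)
  exact IsSelfAdjoint.map hc _

theorem conjStarAlgAut_eq_iff_mul_eq (U : unitary (Matrix k k ℂ)) (X Y : Matrix k k ℂ) :
    conjStarAlgAut ℂ _ U X = Y ↔ (U : Matrix k k ℂ) * X = Y * U := by
  rw [conjStarAlgAut_apply]
  constructor
  · rintro rfl
    rw [mul_assoc _ (star _), star_mul_self_of_mem U.2, mul_one]
  · intro h
    rw [h, mul_assoc, mul_star_self_of_mem U.2, mul_one]

theorem mul_diagonal_comp_eq {W : Matrix k k ℂ} {c d : k → ℝ}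
    (h : W * diagonal (fun i => (c i : ℂ)) = diagonal (fun i => (d i : ℂ)) * W) (f : ℝ → ℝ) :
    W * diagonal (fun i => (f (c i) : ℂ)) = diagonal (fun i => (f (d i) : ℂ)) * W := by
  ext i j
  have hij := congr_fun₂ h i j
  simp only [mul_diagonal, diagonal_mul] at hij ⊢
  -- entrywise, `W i j * c j = d i * W i j`: a nonzero entry forces `c j = d i`
  rcases eq_or_ne (W i j) 0 with h0 | h0
  · simp [h0]
  · have : c j = d i := by exact_mod_cast mul_left_cancel₀ h0 (hij.trans (mul_comm _ _))
    rw [this, mul_comm]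

theorem hermCalc_conj_diagonal (f : ℝ → ℝ) (U : unitary (Matrix k k ℂ)) (c : k → ℝ) :
    hermCalc f (conjStarAlgAut ℂ _ U (diagonal fun i => (c i : ℂ))) =
      conjStarAlgAut ℂ _ U (diagonal fun i => (f (c i) : ℂ)) := by
  set A := conjStarAlgAut ℂ _ U (diagonal fun i => (c i : ℂ))
  have hA : A.IsHermitian := isHermitian_conj_diagonal U c
  set V := hA.eigenvectorUnitary
  have hAV : A = conjStarAlgAut ℂ _ V (diagonal fun i => (hA.eigenvalues i : ℂ)) :=
    hA.eq_conj_diagonal_eigenvalues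
  have hW : conjStarAlgAut ℂ _ (star V * U) (diagonal fun i => (c i : ℂ)) =
      diagonal fun i => (hA.eigenvalues i : ℂ) := by
    rw [conjStarAlgAut_mul_apply]
    change conjStarAlgAut ℂ _ (star V) A = _
    conv_lhs => rw [hAV]
    rw [← conjStarAlgAut_mul_apply, star_mul_self, map_one, StarAlgEquiv.one_apply]
  have key := mul_diagonal_comp_eq ((conjStarAlgAut_eq_iff_mul_eq _ _ _).1 hW) f
  rw [hermCalc, dif_pos hA]
  change conjStarAlgAut ℂ _ V _ = _
  rw [← (conjStarAlgAut_eq_iff_mul_eq _ _ _).2 key, ← conjStarAlgAut_mul_apply, ← mul_assoc,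
    mul_star_self, one_mul]

theorem trace_mul_hermCalc_conj_diagonal (f : ℝ → ℝ) (U : unitary (Matrix k k ℂ)) (c : k → ℝ) :
    (conjStarAlgAut ℂ _ U (diagonal fun i => (c i : ℂ)) *
        hermCalc f (conjStarAlgAut ℂ _ U (diagonal fun i => (c i : ℂ)))).trace =
      ((∑ i, c i * f (c i) : ℝ) : ℂ) := by
  rw [hermCalc_conj_diagonal, ← map_mul, trace_conjStarAlgAut, diagonal_mul_diagonal,
    trace_diagonal]
  push_cast
  rfl

theorem vnEntropy_eq_neg_re_trace_mul_matLog {A : Matrix k k ℂ} (hA : A.IsHermitian) :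
    vnEntropy A = -((A * matLog A).trace).re := by
  have h := trace_mul_hermCalc_conj_diagonal Real.log hA.eigenvectorUnitary hA.eigenvalues
  rw [← hA.eq_conj_diagonal_eigenvalues] at h
  simp only [vnEntropy, dif_pos hA, matLog, h, Complex.ofReal_re, ← Finset.sum_neg_distrib,
    Real.negMulLog, neg_mul]

theorem vnEntropy_zero : vnEntropy (0 : Matrix k k ℂ) = 0 := by
  rw [vnEntropy, dif_pos isHermitian_zero, isHermitian_zero.eigenvalues_eq_zero_iff.2 rfl]
  simp

theorem relEntropy_eq_neg_vnEntropy_sub {D : Matrix k k ℂ} (hD : D.IsHermitian)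
    (E : Matrix k k ℂ) : relEntropy D E = -vnEntropy D - ((D * matLog E).trace).re := by
  rw [relEntropy, vnEntropy_eq_neg_re_trace_mul_matLog hD, Matrix.mul_sub, trace_sub,
    Complex.sub_re, neg_neg]

end Spectral

section Gibbs

variable {k : Type*} [Fintype k] [DecidableEq k] {H : Matrix k k ℂ}

theorem exp_conjStarAlgAut (U : unitary (Matrix k k ℂ)) (M : Matrix k k ℂ) :
    NormedSpace.exp (conjStarAlgAut ℂ _ U M) = conjStarAlgAut ℂ _ U (NormedSpace.exp M) :=
  Matrix.exp_units_conj (toUnits U) M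

/-- The partition function `Z = Tr e^{-β H}`, computed through the spectrum of `H`. -/
def partitionFunction (hH : H.IsHermitian) (β : ℝ) : ℝ :=
  ∑ i, Real.exp (-β * hH.eigenvalues i)

theorem partitionFunction_pos [Nonempty k] (hH : H.IsHermitian) (β : ℝ) :
    0 < partitionFunction hH β :=
  Finset.sum_pos (fun _ _ => Real.exp_pos _) Finset.univ_nonempty

theorem exp_neg_smul_eq_conj_diagonal (hH : H.IsHermitian) (β : ℝ) :
    NormedSpace.exp ((-(β : ℂ)) • H) = conjStarAlgAut ℂ _ hH.eigenvectorUnitary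
      (diagonal fun i => (Real.exp (-β * hH.eigenvalues i) : ℂ)) := by
  conv_lhs => rw [hH.eq_conj_diagonal_eigenvalues]
  rw [← map_smul, exp_conjStarAlgAut, ← diagonal_smul, exp_diagonal]
  congr 2
  ext i
  simp [Complex.exp_eq_exp_ℂ]

theorem gibbs_eq_conj_diagonal (hH : H.IsHermitian) (β : ℝ) :
    gibbs β H = conjStarAlgAut ℂ _ hH.eigenvectorUnitary
      (diagonal fun i => (Real.exp (-β * hH.eigenvalues i) / partitionFunction hH β : ℝ)) := by
  have hZ : (NormedSpace.exp ((-(β : ℂ)) • H)).trace = partitionFunction hH β := by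
    rw [exp_neg_smul_eq_conj_diagonal hH, trace_conjStarAlgAut, trace_diagonal, partitionFunction]
    push_cast
    rfl
  rw [gibbs, hZ, exp_neg_smul_eq_conj_diagonal hH, ← map_smul, ← diagonal_smul]
  congr 2
  ext i
  simp [div_eq_inv_mul]

variable [Nonempty k]

theorem matLog_gibbs (hH : H.IsHermitian) (β : ℝ) :
    matLog (gibbs β H) = (-(β : ℂ)) • H - (Real.log (partitionFunction hH β) : ℂ) • 1 := by
  have hZ := (partitionFunction_pos hH β).ne'
  have hRHS (L : ℝ) : (-(β : ℂ)) • H - (L : ℂ) • 1 = conjStarAlgAut ℂ _ hH.eigenvectorUnitary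
      (diagonal fun i => ((-β * hH.eigenvalues i - L : ℝ) : ℂ)) := by
    conv_lhs => rw [hH.eq_conj_diagonal_eigenvalues]
    rw [← map_one (conjStarAlgAut ℂ _ hH.eigenvectorUnitary), ← map_smul, ← map_smul, ← map_sub]
    congr 1
    ext i j
    by_cases hij : i = j <;> simp [hij]
  rw [hRHS, gibbs_eq_conj_diagonal hH, matLog, hermCalc_conj_diagonal]
  simp_rw [Real.log_div (Real.exp_pos _).ne' hZ, Real.log_exp]

theorem gibbs_posDef (hH : H.IsHermitian) (β : ℝ) : (gibbs β H).PosDef := by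
  rw [gibbs_eq_conj_diagonal hH, conjStarAlgAut_apply]
  refine (IsUnit.posDef_star_right_conjugate_iff isUnit_coe).2 (PosDef.diagonal fun i => ?_)
  exact_mod_cast div_pos (Real.exp_pos _) (partitionFunction_pos hH β)

theorem trace_gibbs (hH : H.IsHermitian) (β : ℝ) : (gibbs β H).trace = 1 := by
  rw [gibbs_eq_conj_diagonal hH, trace_conjStarAlgAut, trace_diagonal, ← Complex.ofReal_sum,
    ← Finset.sum_div]
  exact_mod_cast div_self (partitionFunction_pos hH β).ne'

theorem re_trace_mul_matLog_gibbs (hH : H.IsHermitian) (β : ℝ) {D : Matrix k k ℂ}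
    (hD : D.trace = 1) :
    ((D * matLog (gibbs β H)).trace).re =
      -β * ((H * D).trace).re - Real.log (partitionFunction hH β) := by
  rw [matLog_gibbs hH, Matrix.mul_sub, Matrix.mul_smul, Matrix.mul_smul, Matrix.mul_one,
    trace_sub, trace_smul, trace_smul, hD, trace_mul_comm D H]
  simp

theorem vnEntropy_gibbs (hH : H.IsHermitian) (β : ℝ) :
    vnEntropy (gibbs β H) =
      β * ((H * gibbs β H).trace).re + Real.log (partitionFunction hH β) := by
  rw [vnEntropy_eq_neg_re_trace_mul_matLog (gibbs_posDef hH β).isHermitian,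
    re_trace_mul_matLog_gibbs hH β (trace_gibbs hH β)]
  ring

end Gibbs

section Klein

variable {k : Type*} [Fintype k] [DecidableEq k]

theorem sub_le_mul_log_sub_mul_log {p q : ℝ} (hp : 0 ≤ p) (hq : 0 < q) :
    p - q ≤ p * Real.log p - p * Real.log q := by
  rcases hp.eq_or_lt with rfl | hp
  · simpa using hq.le
  · have h := mul_le_mul_of_nonneg_left (Real.log_le_sub_one_of_pos (div_pos hq hp)) hp.le
    rw [Real.log_div hq.ne' hp.ne', mul_sub_one, mul_div_cancel₀ _ hp.ne'] at h
    linarith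

theorem sum_sub_sum_le_of_mem_doublyStochastic {M : Matrix k k ℝ}
    (hM : M ∈ doublyStochastic ℝ k) {p q : k → ℝ} (hp : ∀ i, 0 ≤ p i) (hq : ∀ j, 0 < q j) :
    ∑ i, p i - ∑ j, q j ≤
      ∑ i, p i * Real.log (p i) - ∑ i, ∑ j, M i j * (p i * Real.log (q j)) := by
  have hrow (x : k → ℝ) : ∑ i, ∑ j, M i j * x i = ∑ i, x i := by
    simp [← Finset.sum_mul, sum_row_of_mem_doublyStochastic hM]
  have hcol (y : k → ℝ) : ∑ i, ∑ j, M i j * y j = ∑ j, y j := by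
    rw [Finset.sum_comm]
    simp [← Finset.sum_mul, sum_col_of_mem_doublyStochastic hM]
  calc ∑ i, p i - ∑ j, q j = ∑ i, ∑ j, M i j * (p i - q j) := by
        simp only [mul_sub, Finset.sum_sub_distrib, hrow, hcol]
    _ ≤ ∑ i, ∑ j, M i j * (p i * Real.log (p i) - p i * Real.log (q j)) :=
        Finset.sum_le_sum fun i _ => Finset.sum_le_sum fun j _ =>
          mul_le_mul_of_nonneg_left (sub_le_mul_log_sub_mul_log (hp i) (hq j))
            (nonneg_of_mem_doublyStochastic hM)
    _ = _ := by simp only [mul_sub, Finset.sum_sub_distrib, hrow (fun i => p i * Real.log (p i))]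

theorem conjStarAlgAut_diagonal_apply_self (W : unitary (Matrix k k ℂ)) (a : k → ℂ) (i : k) :
    conjStarAlgAut ℂ _ W (diagonal a) i i =
      ∑ j, a j * (Complex.normSq ((W : Matrix k k ℂ) i j) : ℂ) := by
  rw [conjStarAlgAut_apply, mul_apply]
  refine Finset.sum_congr rfl fun j _ => ?_
  rw [mul_diagonal, star_apply, mul_right_comm, Complex.star_def, Complex.mul_conj, mul_comm]

theorem normSq_mem_doublyStochastic (W : unitary (Matrix k k ℂ)) :
    (of fun i j => Complex.normSq ((W : Matrix k k ℂ) i j)) ∈ doublyStochastic ℝ k := by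
  have hrow (W : unitary (Matrix k k ℂ)) (i : k) :
      ∑ j, Complex.normSq ((W : Matrix k k ℂ) i j) = 1 := by
    have h := conjStarAlgAut_diagonal_apply_self W (fun _ => 1) i
    rw [diagonal_one, map_one, one_apply_eq] at h
    simp only [one_mul] at h
    exact_mod_cast h.symm
  refine mem_doublyStochastic_iff_sum.2 ⟨fun i j => Complex.normSq_nonneg _, hrow W, fun j => ?_⟩
  simpa [Complex.normSq_conj] using hrow (star W) j

theorem trace_conj_diagonal_mul_conj_diagonal (U V : unitary (Matrix k k ℂ)) (a b : k → ℝ) :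
    (conjStarAlgAut ℂ _ U (diagonal fun i => (a i : ℂ)) *
        conjStarAlgAut ℂ _ V (diagonal fun j => (b j : ℂ))).trace =
      ((∑ i, ∑ j, Complex.normSq (((star U * V : unitary _) : Matrix k k ℂ) i j) *
        (a i * b j) : ℝ) : ℂ) := by
  have hV (Y : Matrix k k ℂ) :
      conjStarAlgAut ℂ _ V Y = conjStarAlgAut ℂ _ U (conjStarAlgAut ℂ _ (star U * V) Y) := by
    rw [← conjStarAlgAut_mul_apply, ← mul_assoc, mul_star_self, one_mul]
  rw [hV, ← map_mul, trace_conjStarAlgAut, trace]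
  simp only [diag_apply, diagonal_mul, conjStarAlgAut_diagonal_apply_self, Finset.mul_sum]
  push_cast
  exact Finset.sum_congr rfl fun i _ => Finset.sum_congr rfl fun j _ => by ring

theorem sub_le_relEntropy {D E : Matrix k k ℂ} (hD : D.PosSemidef) (hE : E.PosDef) :
    D.trace.re - E.trace.re ≤ relEntropy D E := by
  obtain ⟨U, p, hp, rfl⟩ := hD.exists_eq_conj_diagonal
  set V := hE.isHermitian.eigenvectorUnitary
  have hEV : E = conjStarAlgAut ℂ _ V (diagonal fun i => (hE.isHermitian.eigenvalues i : ℂ)) :=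
    hE.isHermitian.eq_conj_diagonal_eigenvalues
  have hlogE := trace_conj_diagonal_mul_conj_diagonal U V p
    fun j => Real.log (hE.isHermitian.eigenvalues j)
  rw [← hermCalc_conj_diagonal Real.log V, ← hEV] at hlogE
  rw [relEntropy, Matrix.mul_sub, trace_sub, Complex.sub_re, matLog, matLog,
    trace_mul_hermCalc_conj_diagonal, hlogE, trace_conjStarAlgAut, trace_diagonal,
    hE.isHermitian.trace_eq_sum_eigenvalues]
  have key := sum_sub_sum_le_of_mem_doublyStochastic (normSq_mem_doublyStochastic (star U * V))
    hp hE.eigenvalues_pos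
  simp only [of_apply] at key
  simpa [Complex.re_sum] using key

end Klein

section OperatorNorm

variable {k : Type*} [Fintype k] [DecidableEq k]

open scoped Matrix.Norms.L2Operator

theorem norm_apply_self_le_opNorm (M : Matrix k k ℂ) (i : k) : ‖M i i‖ ≤ opNorm M := by
  set e : EuclideanSpace ℂ k := EuclideanSpace.single i 1
  have he : M i i = inner ℂ e (toEuclideanCLM (𝕜 := ℂ) M e) := by
    rw [EuclideanSpace.inner_single_left]
    simp [e]
  calc ‖M i i‖ ≤ ‖e‖ * ‖toEuclideanCLM (𝕜 := ℂ) M e‖ := he ▸ norm_inner_le_norm _ _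
    _ ≤ ‖e‖ * (opNorm M * ‖e‖) := by gcongr; exact ContinuousLinearMap.le_opNorm _ _
    _ = opNorm M := by simp [e]

theorem opNorm_conjStarAlgAut (U : unitary (Matrix k k ℂ)) (M : Matrix k k ℂ) :
    opNorm (conjStarAlgAut ℂ _ U M) = opNorm M := by
  rw [opNorm, opNorm, ← cstar_norm_def, ← cstar_norm_def, conjStarAlgAut_apply, ← coe_star,
    CStarRing.norm_mul_coe_unitary, CStarRing.norm_coe_unitary_mul]

theorem abs_re_trace_mul_le_opNorm (H : Matrix k k ℂ) {D : Matrix k k ℂ} (hD : D.PosSemidef) :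
    |((H * D).trace).re| ≤ opNorm H * (D.trace).re := by
  obtain ⟨U, p, hp, rfl⟩ := hD.exists_eq_conj_diagonal
  set M := conjStarAlgAut ℂ _ (star U) H
  have hH : H = conjStarAlgAut ℂ _ U M := by
    rw [← conjStarAlgAut_mul_apply, mul_star_self, map_one, StarAlgEquiv.one_apply]
  have hM (i : k) : |(M i i).re| ≤ opNorm H :=
    (Complex.abs_re_le_norm _).trans <|
      opNorm_conjStarAlgAut (star U) H ▸ norm_apply_self_le_opNorm M i
  rw [trace_conjStarAlgAut, trace_diagonal]
  conv_lhs => rw [hH, ← map_mul, trace_conjStarAlgAut]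
  simp only [trace, diag_apply, mul_diagonal, Complex.re_sum, Complex.re_mul_ofReal,
    Complex.ofReal_re, Finset.mul_sum]
  refine (Finset.abs_sum_le_sum_abs _ _).trans (Finset.sum_le_sum fun i _ => ?_)
  rw [abs_mul, abs_of_nonneg (hp i)]
  exact mul_le_mul_of_nonneg_right (hM i) (hp i)

theorem re_trace_mul_sub_le_two_opNorm (H : Matrix k k ℂ) {D D' : Matrix k k ℂ}
    (hD : IsDensityMatrix D) (hD' : IsDensityMatrix D') :
    ((H * (D - D')).trace).re ≤ 2 * opNorm H := by
  have h := abs_le.1 (abs_re_trace_mul_le_opNorm H hD.1)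
  have h' := abs_le.1 (abs_re_trace_mul_le_opNorm H hD'.1)
  rw [hD.2, Complex.one_re, mul_one] at h
  rw [hD'.2, Complex.one_re, mul_one] at h'
  rw [Matrix.mul_sub, trace_sub, Complex.sub_re]
  linarith

end OperatorNorm

section Kronecker

variable {k₁ k₂ : Type*}

theorem _root_.Matrix.IsHermitian.kronecker {A : Matrix k₁ k₁ ℂ} {B : Matrix k₂ k₂ ℂ}
    (hA : A.IsHermitian) (hB : B.IsHermitian) : (A ⊗ₖ B).IsHermitian := by
  rw [IsHermitian, conjTranspose_kronecker, hA.eq, hB.eq]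

variable [Fintype k₁] [Fintype k₂] [DecidableEq k₁] [DecidableEq k₂]

def kroneckerUnitary (U : unitary (Matrix k₁ k₁ ℂ)) (V : unitary (Matrix k₂ k₂ ℂ)) :
    unitary (Matrix (k₁ × k₂) (k₁ × k₂) ℂ) :=
  ⟨(U : Matrix k₁ k₁ ℂ) ⊗ₖ (V : Matrix k₂ k₂ ℂ), kronecker_mem_unitary U.prop V.prop⟩

theorem conjStarAlgAut_kronecker (U : unitary (Matrix k₁ k₁ ℂ)) (V : unitary (Matrix k₂ k₂ ℂ))
    (X : Matrix k₁ k₁ ℂ) (Y : Matrix k₂ k₂ ℂ) :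
    conjStarAlgAut ℂ _ U X ⊗ₖ conjStarAlgAut ℂ _ V Y =
      conjStarAlgAut ℂ (Matrix (k₁ × k₂) (k₁ × k₂) ℂ) (kroneckerUnitary U V) (X ⊗ₖ Y) := by
  simp only [conjStarAlgAut_apply, kroneckerUnitary, mul_kronecker_mul, star_eq_conjTranspose,
    conjTranspose_kronecker]

theorem vnEntropy_kronecker {A : Matrix k₁ k₁ ℂ} {B : Matrix k₂ k₂ ℂ} (hA : A.IsHermitian)
    (hB : B.IsHermitian) (hA₁ : A.trace = 1) (hB₁ : B.trace = 1) :
    vnEntropy (A ⊗ₖ B) = vnEntropy A + vnEntropy B := by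
  set W := kroneckerUnitary hA.eigenvectorUnitary hB.eigenvectorUnitary
  have hAB : A ⊗ₖ B = conjStarAlgAut ℂ (Matrix (k₁ × k₂) (k₁ × k₂) ℂ) W
      (diagonal fun x => ((hA.eigenvalues x.1 * hB.eigenvalues x.2 : ℝ) : ℂ)) := by
    conv_lhs => rw [hA.eq_conj_diagonal_eigenvalues, hB.eq_conj_diagonal_eigenvalues,
      conjStarAlgAut_kronecker, diagonal_kronecker_diagonal]
    push_cast
    rfl
  have h := trace_mul_hermCalc_conj_diagonal Real.log W
    fun x => hA.eigenvalues x.1 * hB.eigenvalues x.2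
  rw [← hAB] at h
  rw [vnEntropy_eq_neg_re_trace_mul_matLog (hA.kronecker hB), matLog, h,
    Complex.ofReal_re, vnEntropy, dif_pos hA, vnEntropy, dif_pos hB, ← Finset.sum_neg_distrib,
    Fintype.sum_prod_type]
  have hneg (x : ℝ) : -(x * Real.log x) = Real.negMulLog x := by rw [Real.negMulLog, neg_mul]
  simp_rw [hneg, Real.negMulLog_mul, Finset.sum_add_distrib, ← Finset.sum_mul, ← Finset.mul_sum,
    ← Finset.sum_mul, sum_eigenvalues_eq_one hA hA₁, sum_eigenvalues_eq_one hB hB₁, one_mul]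

end Kronecker

section PartialTrace

variable {k₁ k₂ : Type*}

theorem ptraceR_eq_sum_submatrix [Fintype k₂] (D : Matrix (k₁ × k₂) (k₁ × k₂) ℂ) :
    ptraceR D = ∑ s, D.submatrix (fun i => (i, s)) (fun i => (i, s)) := by
  ext i j
  simp [ptraceR, Matrix.sum_apply]

theorem ptraceL_eq_sum_submatrix [Fintype k₁] (D : Matrix (k₁ × k₂) (k₁ × k₂) ℂ) :
    ptraceL D = ∑ s, D.submatrix (fun i => (s, i)) (fun i => (s, i)) := by
  ext i j
  simp [ptraceL, Matrix.sum_apply]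

theorem _root_.Matrix.PosSemidef.ptraceR [Fintype k₁] [Fintype k₂]
    {D : Matrix (k₁ × k₂) (k₁ × k₂) ℂ} (hD : D.PosSemidef) : (ptraceR D).PosSemidef := by
  rw [ptraceR_eq_sum_submatrix]
  exact posSemidef_sum _ fun s _ => hD.submatrix _

theorem _root_.Matrix.PosSemidef.ptraceL [Fintype k₁] [Fintype k₂]
    {D : Matrix (k₁ × k₂) (k₁ × k₂) ℂ} (hD : D.PosSemidef) : (ptraceL D).PosSemidef := by
  rw [ptraceL_eq_sum_submatrix]
  exact posSemidef_sum _ fun s _ => hD.submatrix _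

theorem trace_ptraceR [Fintype k₁] [Fintype k₂] (D : Matrix (k₁ × k₂) (k₁ × k₂) ℂ) :
    (ptraceR D).trace = D.trace := by
  simp [ptraceR, trace, Fintype.sum_prod_type]

theorem trace_ptraceL [Fintype k₁] [Fintype k₂] (D : Matrix (k₁ × k₂) (k₁ × k₂) ℂ) :
    (ptraceL D).trace = D.trace := by
  simp [ptraceL, trace, Fintype.sum_prod_type, Finset.sum_comm (γ := k₁)]

theorem ptraceR_kronecker [Fintype k₂] (X : Matrix k₁ k₁ ℂ) (Y : Matrix k₂ k₂ ℂ) :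
    ptraceR (X ⊗ₖ Y) = Y.trace • X := by
  ext i j
  simp [ptraceR, trace, ← Finset.mul_sum, mul_comm]

theorem ptraceL_kronecker [Fintype k₁] (X : Matrix k₁ k₁ ℂ) (Y : Matrix k₂ k₂ ℂ) :
    ptraceL (X ⊗ₖ Y) = X.trace • Y := by
  ext i j
  simp [ptraceL, trace, ← Finset.sum_mul]

theorem trace_kronecker_one_mul [Fintype k₁] [Fintype k₂] [DecidableEq k₂] (X : Matrix k₁ k₁ ℂ)
    (D : Matrix (k₁ × k₂) (k₁ × k₂) ℂ) :
    ((X ⊗ₖ (1 : Matrix k₂ k₂ ℂ)) * D).trace = (X * ptraceR D).trace := by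
  simp only [trace, diag_apply, mul_apply, kroneckerMap_apply, one_apply, mul_ite, mul_one,
    mul_zero, ite_mul, zero_mul, Fintype.sum_prod_type, Finset.sum_ite_eq, Finset.mem_univ, ↓reduceIte, ptraceR,
    of_apply, Finset.mul_sum]
  exact Finset.sum_congr rfl fun _ _ => Finset.sum_comm

theorem trace_one_kronecker_mul [Fintype k₁] [Fintype k₂] [DecidableEq k₁] (Y : Matrix k₂ k₂ ℂ)
    (D : Matrix (k₁ × k₂) (k₁ × k₂) ℂ) :
    (((1 : Matrix k₁ k₁ ℂ) ⊗ₖ Y) * D).trace = (Y * ptraceL D).trace := by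
  simp only [trace, diag_apply, mul_apply, kroneckerMap_apply, one_apply, ite_mul, one_mul,
    zero_mul, Fintype.sum_prod_type, Finset.sum_ite_irrel, Finset.sum_const_zero,
    Finset.sum_ite_eq, Finset.mem_univ, ↓reduceIte, ptraceL, of_apply, Finset.mul_sum]
  rw [Finset.sum_comm]
  exact Finset.sum_congr rfl fun _ _ => Finset.sum_comm

end PartialTrace

section MutualEntropy

variable {k₁ k₂ : Type*} [Fintype k₁] [Fintype k₂] [DecidableEq k₁] [DecidableEq k₂]

theorem trace_mul_sub_eq_of_ptrace_eq {D D' : Matrix (k₁ × k₂) (k₁ × k₂) ℂ}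
    (hR : ptraceR D = ptraceR D') (hL : ptraceL D = ptraceL D') (HA : Matrix k₁ k₁ ℂ)
    (HB : Matrix k₂ k₂ ℂ) (Hd : Matrix (k₁ × k₂) (k₁ × k₂) ℂ) :
    ((HA ⊗ₖ (1 : Matrix k₂ k₂ ℂ) + Hd + (1 : Matrix k₁ k₁ ℂ) ⊗ₖ HB) * (D - D')).trace =
      (Hd * (D - D')).trace := by
  simp only [Matrix.add_mul, Matrix.mul_sub, trace_add, trace_sub, trace_kronecker_one_mul,
    trace_one_kronecker_mul, hR, hL]
  ring

theorem mutualEntropy_of_isEmpty [IsEmpty (k₁ × k₂)] (D : Matrix (k₁ × k₂) (k₁ × k₂) ℂ) :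
    mutualEntropy D = 0 := by
  have hA : ptraceR D = 0 := by
    ext i j
    exact Finset.sum_eq_zero fun s _ => isEmptyElim (i, s)
  have hB : ptraceL D = 0 := by
    ext i j
    exact Finset.sum_eq_zero fun s _ => isEmptyElim (s, i)
  rw [mutualEntropy, hA, hB, Subsingleton.elim D 0, vnEntropy_zero, vnEntropy_zero,
    vnEntropy_zero, sub_zero, add_zero]

theorem mutualEntropy_gibbs_le [Nonempty (k₁ × k₂)] {H : Matrix (k₁ × k₂) (k₁ × k₂) ℂ}
    (hH : H.IsHermitian) (β : ℝ) :
    mutualEntropy (gibbs β H) ≤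
      β * ((H * (ptraceR (gibbs β H) ⊗ₖ ptraceL (gibbs β H) - gibbs β H)).trace).re := by
  set ρ := gibbs β H
  have hρ := gibbs_posDef hH β
  have hρ₁ : ρ.trace = 1 := trace_gibbs hH β
  have hA := hρ.posSemidef.ptraceR
  have hB := hρ.posSemidef.ptraceL
  have hA₁ : (ptraceR ρ).trace = 1 := (trace_ptraceR ρ).trans hρ₁
  have hB₁ : (ptraceL ρ).trace = 1 := (trace_ptraceL ρ).trans hρ₁
  have hσ₁ : (ptraceR ρ ⊗ₖ ptraceL ρ).trace = 1 := by rw [trace_kronecker, hA₁, hB₁, one_mul]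
  have klein := sub_le_relEntropy (hA.kronecker hB) hρ
  rw [relEntropy_eq_neg_vnEntropy_sub (hA.isHermitian.kronecker hB.isHermitian),
    vnEntropy_kronecker hA.isHermitian hB.isHermitian hA₁ hB₁, re_trace_mul_matLog_gibbs hH β hσ₁,
    hσ₁, hρ₁, sub_self] at klein
  rw [mutualEntropy, vnEntropy_gibbs hH β, Matrix.mul_sub, trace_sub, Complex.sub_re]
  linarith

end MutualEntropy

/-- thermal area law, finite-dimensional form. -/
theorem thermal_area_law {m n : ℕ}
    (HA : Matrix (Fin m) (Fin m) ℂ) (hHA : HA.IsHermitian)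
    (HB : Matrix (Fin n) (Fin n) ℂ) (hHB : HB.IsHermitian)
    (Hd : Matrix (Fin m × Fin n) (Fin m × Fin n) ℂ) (hHd : Hd.IsHermitian)
    (β : ℝ) (hβ : 0 < β)
    (HAB : Matrix (Fin m × Fin n) (Fin m × Fin n) ℂ)
    (hHAB : HAB = HA ⊗ₖ (1 : Matrix (Fin n) (Fin n) ℂ) + Hd
      + (1 : Matrix (Fin m) (Fin m) ℂ) ⊗ₖ HB)
    (ρ : Matrix (Fin m × Fin n) (Fin m × Fin n) ℂ) (hρ : ρ = gibbs β HAB) :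
    mutualEntropy ρ ≤ β * ((Hd * (ptraceR ρ ⊗ₖ ptraceL ρ - ρ)).trace).re ∧
    β * ((Hd * (ptraceR ρ ⊗ₖ ptraceL ρ - ρ)).trace).re ≤ 2 * β * opNorm Hd := by
  rcases isEmpty_or_nonempty (Fin m × Fin n) with _ | _
  · rw [Subsingleton.elim (ptraceR ρ ⊗ₖ ptraceL ρ - ρ) 0, Matrix.mul_zero, trace_zero,
      Complex.zero_re, mul_zero, mutualEntropy_of_isEmpty]
    exact ⟨le_rfl, mul_nonneg (by positivity) (norm_nonneg _)⟩
  have hH : HAB.IsHermitian :=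
    hHAB ▸ ((hHA.kronecker isHermitian_one).add hHd).add (isHermitian_one.kronecker hHB)
  have hρD : IsDensityMatrix ρ := hρ ▸ ⟨(gibbs_posDef hH β).posSemidef, trace_gibbs hH β⟩
  have hσD : IsDensityMatrix (ptraceR ρ ⊗ₖ ptraceL ρ) :=
    ⟨hρD.1.ptraceR.kronecker hρD.1.ptraceL,
      by rw [trace_kronecker, trace_ptraceR, trace_ptraceL, hρD.2, one_mul]⟩
  have hlocal := trace_mul_sub_eq_of_ptrace_eq (D := ptraceR ρ ⊗ₖ ptraceL ρ) (D' := ρ)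
    (by rw [ptraceR_kronecker, trace_ptraceL, hρD.2, one_smul])
    (by rw [ptraceL_kronecker, trace_ptraceR, hρD.2, one_smul]) HA HB Hd
  refine ⟨?_, ?_⟩
  · rw [← hlocal, ← hHAB, hρ]
    exact mutualEntropy_gibbs_le hH β
  · rw [mul_comm 2 β, mul_assoc]
    exact mul_le_mul_of_nonneg_left (re_trace_mul_sub_le_two_opNorm Hd hσD hρD) hβ.le

end TAL
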